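/- Let W1, W2 be finitely-valued random variables and let Y1^n = (Y_{1,1}, …, Y_{1,n}) and Y2^n = (Y_{2,1}, …, Y_{2,n}) be finitely-valued sequences on the same probability space such that, for each 1 ≤ i ≤ n, Y1^{i−1} is conditionally independent of (W1, W2, Y_{2,i}) given Y2^{i−1}. Then I(W2; Y2^n | W1) ≤ ∑_{i=1}^{n} I( (W1, W2, Y2^{i−1}); Y_{2,i} | (W1, Y1^{i−1}) ). -/

import Mathlib

open scoped BigOperators Classical

noncomputable section

namespace BRSec

variable {Ω : Type*} [Fintype Ω]

/-- Probability that the random variable `X` takes the value `a`, under the weight `p`. -/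
def prb (p : Ω → ℝ) {α : Type*} (X : Ω → α) (a : α) : ℝ :=
  ∑ ω, if X ω = a then p ω else 0

/-- `p` is a probability mass function on the finite sample space `Ω`. -/
def IsPMF (p : Ω → ℝ) : Prop :=
  (∀ ω, 0 ≤ p ω) ∧ ∑ ω, p ω = 1

/-- Shannon entropy of the finitely-valued random variable `X`. -/
def H (p : Ω → ℝ) {α : Type*} [Fintype α] (X : Ω → α) : ℝ :=
  ∑ a, Real.negMulLog (prb p X a)

/-- Mutual information `I(X;Y)`. -/
def MI (p : Ω → ℝ) {α β : Type*} [Fintype α] [Fintype β] (X : Ω → α) (Y : Ω → β) : ℝ :=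
  H p X + H p Y - H p fun ω => (X ω, Y ω)

/-- Conditional mutual information `I(X;Y|Z)`. -/
def CMI (p : Ω → ℝ) {α β γ : Type*} [Fintype α] [Fintype β] [Fintype γ]
    (X : Ω → α) (Y : Ω → β) (Z : Ω → γ) : ℝ :=
  (H p fun ω => (X ω, Z ω)) + (H p fun ω => (Y ω, Z ω))
    - (H p fun ω => (X ω, Y ω, Z ω)) - H p Z

/-- `X → Y → Z` is a Markov chain: `X` and `Z` are conditionally independent given `Y`. -/
def MarkovTriple (p : Ω → ℝ) {α β γ : Type*} (X : Ω → α) (Y : Ω → β) (Z : Ω → γ) : Prop :=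
  ∀ a b c,
    prb p (fun ω => (X ω, Y ω, Z ω)) (a, b, c) * prb p Y b
      = prb p (fun ω => (X ω, Y ω)) (a, b) * prb p (fun ω => (Y ω, Z ω)) (b, c)

/-! By the chain rule, `I(W₂;Y₂ⁿ|W₁)` is the sum of the per-letter terms
`I(W₂;Y₂ᵢ|W₁,Y₂^{i-1})`. For a single letter write `P = Y₂^{i-1}`, `Q = Y₁^{i-1}`,
`B = Y₂ᵢ`. The Markov chain `Q — P — (W₁,W₂,B)` gives `I(Q;B|W₁,P) = 0`, and then expanding
`I((W₂,Q);B|W₁,P)` by the chain rule in both orders shows that adding `Q` to the conditioning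
does not decrease `I(W₂;B|W₁,P)`. Finally `I(W₂;B|W₁,P,Q) ≤ I((P,W₂);B|W₁,Q)` by the chain
rule once more, and the extra `W₁` in the first argument is free since it is conditioned on. -/

section

open Function Real

variable {α β γ δ : Type*}

theorem prb_nonneg {p : Ω → ℝ} (hp : ∀ ω, 0 ≤ p ω) (X : Ω → α) (a : α) : 0 ≤ prb p X a :=
  Finset.sum_nonneg fun ω _ => by split <;> simp [hp ω]

theorem prb_le_prb_comp {p : Ω → ℝ} (hp : ∀ ω, 0 ≤ p ω) (f : α → β) (X : Ω → α) (a : α) :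
    prb p X a ≤ prb p (fun ω => f (X ω)) (f a) :=
  Finset.sum_le_sum fun ω _ => by
    by_cases h : X ω = a
    · simp [h]
    · by_cases h' : f (X ω) = f a <;> simp [h, h', hp ω]

theorem prb_comp (p : Ω → ℝ) [Fintype α] (f : α → β) (X : Ω → α) (b : β) :
    prb p (fun ω => f (X ω)) b = ∑ a with f a = b, prb p X a := by
  simp only [prb]
  rw [Finset.sum_comm]
  simp

theorem prb_comp_injective (p : Ω → ℝ) {f : α → β} (hf : Injective f) (X : Ω → α) (a : α) :
    prb p (fun ω => f (X ω)) (f a) = prb p X a := by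
  simp only [prb, hf.eq_iff]

theorem sum_prb (p : Ω → ℝ) [Fintype α] (X : Ω → α) : ∑ a, prb p X a = ∑ ω, p ω := by
  simp only [prb]
  rw [Finset.sum_comm]
  simp

theorem sum_prb_pair_left (p : Ω → ℝ) [Fintype α] (X : Ω → α) (Z : Ω → γ) (z : γ) :
    ∑ x, prb p (fun ω => (X ω, Z ω)) (x, z) = prb p Z z := by
  simp only [prb]
  rw [Finset.sum_comm]
  refine Finset.sum_congr rfl fun ω _ => ?_
  by_cases h : Z ω = z <;> simp [h]

theorem H_comp_injective (p : Ω → ℝ) [Fintype α] [Fintype β] {f : α → β} (hf : Injective f)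
    (X : Ω → α) : H p (fun ω => f (X ω)) = H p X := by
  refine (Fintype.sum_of_injective f hf _ _ (fun b hb => ?_) fun a => ?_).symm
  · rw [prb_comp, Finset.sum_eq_zero fun a ha => absurd ⟨a, (Finset.mem_filter.1 ha).2⟩ hb,
      negMulLog_zero]
  · rw [prb_comp_injective p hf]

theorem H_comp_of_leftInverse (p : Ω → ℝ) [Fintype α] [Fintype β] (f : α → β) (g : β → α)
    (hgf : LeftInverse g f) (X : Ω → α) : H p (fun ω => f (X ω)) = H p X :=
  H_comp_injective p hgf.injective X

theorem H_comp_eq_neg_sum (p : Ω → ℝ) [Fintype α] [Fintype β] (f : α → β) (X : Ω → α) :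
    H p (fun ω => f (X ω)) = -∑ a, prb p X a * log (prb p (fun ω => f (X ω)) (f a)) := by
  rw [← Finset.sum_fiberwise _ f, ← Finset.sum_neg_distrib]
  refine Finset.sum_congr rfl fun b _ => ?_
  have hfiber : ∑ a with f a = b, prb p X a * log (prb p (fun ω => f (X ω)) (f a))
      = (∑ a with f a = b, prb p X a) * log (prb p (fun ω => f (X ω)) b) := by
    rw [Finset.sum_mul]
    exact Finset.sum_congr rfl fun a ha => by rw [(Finset.mem_filter.1 ha).2]
  rw [hfiber, ← prb_comp, negMulLog, neg_mul]

theorem CMI_eq_sum (p : Ω → ℝ) [Fintype α] [Fintype β] [Fintype γ]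
    (X : Ω → α) (Y : Ω → β) (Z : Ω → γ) :
    CMI p X Y Z = ∑ v : α × β × γ, prb p (fun ω => (X ω, Y ω, Z ω)) v *
      (log (prb p (fun ω => (X ω, Y ω, Z ω)) v) + log (prb p Z v.2.2)
        - log (prb p (fun ω => (X ω, Z ω)) (v.1, v.2.2))
        - log (prb p (fun ω => (Y ω, Z ω)) (v.2.1, v.2.2))) := by
  set V := fun ω => (X ω, Y ω, Z ω)
  rw [CMI, H_comp_eq_neg_sum p (fun v : α × β × γ => (v.1, v.2.2)) V,
    H_comp_eq_neg_sum p (fun v : α × β × γ => (v.2.1, v.2.2)) V,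
    H_comp_eq_neg_sum p (fun v : α × β × γ => v.2.2) V]
  simp only [H, negMulLog, ← Finset.sum_neg_distrib, ← Finset.sum_add_distrib,
    ← Finset.sum_sub_distrib]
  exact Finset.sum_congr rfl fun v _ => by ring

theorem sub_le_mul_log_div {q r : ℝ} (hq : 0 < q) (hr : 0 < r) : q - r ≤ q * log (q / r) := by
  have h := mul_le_mul_of_nonneg_left (log_le_sub_one_of_pos (div_pos hr hq)) hq.le
  rw [mul_sub, mul_one, mul_div_cancel₀ _ hq.ne'] at h
  rw [← inv_div, log_inv]
  linarith

theorem CMI_nonneg {p : Ω → ℝ} (hp : ∀ ω, 0 ≤ p ω) [Fintype α] [Fintype β] [Fintype γ]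
    (X : Ω → α) (Y : Ω → β) (Z : Ω → γ) : 0 ≤ CMI p X Y Z := by
  set q := prb p (fun ω => (X ω, Y ω, Z ω))
  set A := prb p (fun ω => (X ω, Z ω))
  set B := prb p (fun ω => (Y ω, Z ω))
  set C := prb p Z
  -- Gibbs' inequality against `r`, whose total mass equals that of `q`.
  set r : α × β × γ → ℝ := fun v => A (v.1, v.2.2) * B (v.2.1, v.2.2) / C v.2.2
  have hterm : ∀ v, q v - r v ≤ q v * (log (q v) + log (C v.2.2)
      - log (A (v.1, v.2.2)) - log (B (v.2.1, v.2.2))) := by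
    rintro ⟨x, y, z⟩
    have hq0 : 0 ≤ q (x, y, z) := prb_nonneg hp _ _
    dsimp only
    rcases hq0.eq_or_lt with hq | hq
    · rw [← hq, zero_sub, zero_mul, neg_nonpos]
      exact div_nonneg (mul_nonneg (prb_nonneg hp _ _) (prb_nonneg hp _ _)) (prb_nonneg hp _ _)
    · have hA := hq.trans_le (prb_le_prb_comp hp (fun v : α × β × γ => (v.1, v.2.2)) _ (x, y, z))
      have hB := hq.trans_le (prb_le_prb_comp hp (fun v : α × β × γ => (v.2.1, v.2.2)) _ (x, y, z))
      have hC := hq.trans_le (prb_le_prb_comp hp (fun v : α × β × γ => v.2.2) _ (x, y, z))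
      have hlog : log (q (x, y, z)) + log (C z) - log (A (x, z)) - log (B (y, z))
          = log (q (x, y, z) / r (x, y, z)) := by
        simp only [r]
        rw [log_div hq.ne' (by positivity), log_div (by positivity) hC.ne',
          log_mul hA.ne' hB.ne']
        ring
      rw [hlog]
      exact sub_le_mul_log_div hq (by positivity)
  have hr : ∑ v, r v = ∑ ω, p ω := by
    calc ∑ v, r v = ∑ z, (∑ x, A (x, z)) * (∑ y, B (y, z)) / C z := by
          simp only [r, Fintype.sum_prod_type, Finset.sum_mul_sum, Finset.sum_div]
          exact (Finset.sum_congr rfl fun _ _ => Finset.sum_comm).trans Finset.sum_comm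
      _ = ∑ z, C z := by simp only [A, B, C, sum_prb_pair_left, mul_self_div_self]
      _ = ∑ ω, p ω := sum_prb p Z
  rw [CMI_eq_sum]
  calc (0 : ℝ) = ∑ v, (q v - r v) := by rw [Finset.sum_sub_distrib, hr, sum_prb, sub_self]
    _ ≤ _ := Finset.sum_le_sum fun v _ => hterm v

theorem CMI_eq_zero_of_markovTriple {p : Ω → ℝ} (hp : ∀ ω, 0 ≤ p ω)
    [Fintype α] [Fintype β] [Fintype γ] {X : Ω → α} {Y : Ω → β} {Z : Ω → γ}
    (h : MarkovTriple p X Y Z) : CMI p X Z Y = 0 := by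
  rw [CMI_eq_sum]
  refine Finset.sum_eq_zero fun ⟨a, c, b⟩ _ => ?_
  have hXZY : prb p (fun ω => (X ω, Z ω, Y ω)) (a, c, b)
      = prb p (fun ω => (X ω, Y ω, Z ω)) (a, b, c) :=
    prb_comp_injective p (f := fun t : α × β × γ => (t.1, t.2.2, t.2.1))
      (LeftInverse.injective (g := fun t => (t.1, t.2.2, t.2.1)) fun _ => rfl)
      (fun ω => (X ω, Y ω, Z ω)) (a, b, c)
  have hZY : prb p (fun ω => (Z ω, Y ω)) (c, b) = prb p (fun ω => (Y ω, Z ω)) (b, c) :=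
    prb_comp_injective p Prod.swap_injective (fun ω => (Y ω, Z ω)) (b, c)
  dsimp only
  rw [hXZY, hZY]
  rcases (prb_nonneg hp (fun ω => (X ω, Y ω, Z ω)) (a, b, c)).eq_or_lt with hq | hq
  · rw [← hq, zero_mul]
  · have hXY := hq.trans_le (prb_le_prb_comp hp (fun t : α × β × γ => (t.1, t.2.1)) _ (a, b, c))
    have hYZ := hq.trans_le (prb_le_prb_comp hp (fun t : α × β × γ => t.2) _ (a, b, c))
    have hY := hq.trans_le (prb_le_prb_comp hp (fun t : α × β × γ => t.2.1) _ (a, b, c))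
    rw [← log_mul hq.ne' hY.ne', h a b c, log_mul hXY.ne' hYZ.ne']
    ring

section CMI

variable (p : Ω → ℝ) [Fintype α] [Fintype β] [Fintype γ] [Fintype δ]

theorem CMI_comp_injective {α' β' γ' : Type*} [Fintype α'] [Fintype β'] [Fintype γ']
    {f : α → α'} {g : β → β'} {h : γ → γ'} (hf : Injective f) (hg : Injective g)
    (hh : Injective h) (X : Ω → α) (Y : Ω → β) (Z : Ω → γ) :
    CMI p (fun ω => f (X ω)) (fun ω => g (Y ω)) (fun ω => h (Z ω)) = CMI p X Y Z := by
  have hXZ := H_comp_injective p (hf.prodMap hh) fun ω => (X ω, Z ω)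
  have hYZ := H_comp_injective p (hg.prodMap hh) fun ω => (Y ω, Z ω)
  have hXYZ := H_comp_injective p (hf.prodMap (hg.prodMap hh)) fun ω => (X ω, Y ω, Z ω)
  have hZ := H_comp_injective p hh Z
  simp only [Prod.map] at hXZ hYZ hXYZ
  rw [CMI, CMI, hXZ, hYZ, hXYZ, hZ]

theorem CMI_comm (X : Ω → α) (Y : Ω → β) (Z : Ω → γ) : CMI p X Y Z = CMI p Y X Z := by
  have h := H_comp_of_leftInverse p (fun t : α × β × γ => (t.2.1, t.1, t.2.2))
    (fun t => (t.2.1, t.1, t.2.2)) (fun _ => rfl) fun ω => (X ω, Y ω, Z ω)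
  rw [CMI, CMI, ← h]
  ring

theorem CMI_prod_right (X : Ω → α) (Y : Ω → β) (W : Ω → δ) (Z : Ω → γ) :
    CMI p X (fun ω => (Y ω, W ω)) Z = CMI p X Y Z + CMI p X W (fun ω => (Z ω, Y ω)) := by
  have h1 := H_comp_of_leftInverse p (fun t : (β × δ) × γ => (t.1.2, t.2, t.1.1))
    (fun t => ((t.2.2, t.1), t.2.1)) (fun _ => rfl) fun ω => ((Y ω, W ω), Z ω)
  have h2 := H_comp_of_leftInverse p (fun t : α × (β × δ) × γ => (t.1, t.2.1.2, t.2.2, t.2.1.1))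
    (fun t => (t.1, (t.2.2.2, t.2.1), t.2.2.1)) (fun _ => rfl) fun ω => (X ω, (Y ω, W ω), Z ω)
  have h3 := H_comp_of_leftInverse p (fun t : β × γ => (t.2, t.1))
    (fun t => (t.2, t.1)) (fun _ => rfl) fun ω => (Y ω, Z ω)
  have h4 := H_comp_of_leftInverse p (fun t : α × β × γ => (t.1, t.2.2, t.2.1))
    (fun t => (t.1, t.2.2, t.2.1)) (fun _ => rfl) fun ω => (X ω, Y ω, Z ω)
  rw [CMI, CMI, CMI, ← h1, ← h2, ← h3, ← h4]
  ring

theorem CMI_prod_left (X : Ω → α) (W : Ω → δ) (Y : Ω → β) (Z : Ω → γ) :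
    CMI p (fun ω => (X ω, W ω)) Y Z = CMI p X Y Z + CMI p W Y (fun ω => (Z ω, X ω)) := by
  rw [CMI_comm, CMI_prod_right, CMI_comm p Y, CMI_comm p Y]

theorem CMI_prod_comp_cond_left (f : γ → δ) (X : Ω → α) (Y : Ω → β) (Z : Ω → γ) :
    CMI p (fun ω => (f (Z ω), X ω)) Y Z = CMI p X Y Z := by
  have h1 := H_comp_of_leftInverse p (fun t : α × γ => ((f t.2, t.1), t.2))
    (fun t => (t.1.2, t.2)) (fun _ => rfl) fun ω => (X ω, Z ω)
  have h2 := H_comp_of_leftInverse p (fun t : α × β × γ => ((f t.2.2, t.1), t.2.1, t.2.2))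
    (fun t => (t.1.2, t.2)) (fun _ => rfl) fun ω => (X ω, Y ω, Z ω)
  rw [CMI, CMI, h1, h2]

theorem CMI_eq_zero_of_subsingleton [Subsingleton β] (X : Ω → α) (Y : Ω → β) (Z : Ω → γ) :
    CMI p X Y Z = 0 := by
  have h1 := H_comp_injective p (f := fun t : β × γ => t.2)
    (fun _ _ h => Prod.ext (Subsingleton.elim _ _) h) fun ω => (Y ω, Z ω)
  have h2 := H_comp_injective p (f := fun t : α × β × γ => (t.1, t.2.2))
    (fun _ _ h => by
      simp only [Prod.ext_iff] at h ⊢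
      exact ⟨h.1, Subsingleton.elim _ _, h.2⟩) fun ω => (X ω, Y ω, Z ω)
  rw [CMI, ← h1, ← h2]
  ring

variable {p}

theorem CMI_prod_right_eq_zero_iff (hp : ∀ ω, 0 ≤ p ω) (X : Ω → α) (Y : Ω → β) (W : Ω → δ)
    (Z : Ω → γ) : CMI p X (fun ω => (Y ω, W ω)) Z = 0 ↔
      CMI p X Y Z = 0 ∧ CMI p X W (fun ω => (Z ω, Y ω)) = 0 := by
  rw [CMI_prod_right]
  exact add_eq_zero_iff_of_nonneg (CMI_nonneg hp _ _ _) (CMI_nonneg hp _ _ _)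

theorem CMI_le_CMI_prod_left (hp : ∀ ω, 0 ≤ p ω) (X : Ω → α) (W : Ω → δ) (Y : Ω → β)
    (Z : Ω → γ) : CMI p W Y (fun ω => (Z ω, X ω)) ≤ CMI p (fun ω => (X ω, W ω)) Y Z := by
  rw [CMI_prod_left]
  exact le_add_of_nonneg_left (CMI_nonneg hp _ _ _)

theorem CMI_le_CMI_cond_prod_of_CMI_eq_zero (hp : ∀ ω, 0 ≤ p ω) {Q : Ω → δ} {Y : Ω → β}
    {Z : Ω → γ} (h : CMI p Q Y Z = 0) (X : Ω → α) :
    CMI p X Y Z ≤ CMI p X Y (fun ω => (Z ω, Q ω)) := by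
  -- expand `I((X,Q);Y|Z)` by the chain rule in both orders
  have hXQ := CMI_prod_left p X Q Y Z
  have hQX := CMI_prod_left p Q X Y Z
  have hswap := CMI_comp_injective p Prod.swap_injective injective_id injective_id
    (fun ω => (X ω, Q ω)) Y Z
  have := CMI_nonneg hp Q Y fun ω => (Z ω, X ω)
  simp only [Prod.swap, id] at hswap
  linarith

theorem CMI_le_CMI_of_markovTriple {ε : Type*} [Fintype ε] (hp : ∀ ω, 0 ≤ p ω)
    {Q : Ω → α} {P : Ω → β} {B : Ω → γ} (W1 : Ω → δ) (W2 : Ω → ε)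
    (hM : MarkovTriple p Q P fun ω => (W1 ω, W2 ω, B ω)) :
    CMI p W2 B (fun ω => (W1 ω, P ω))
      ≤ CMI p (fun ω => (W1 ω, W2 ω, P ω)) B (fun ω => (W1 ω, Q ω)) := by
  have hW2B := ((CMI_prod_right_eq_zero_iff hp Q W1 (fun ω => (W2 ω, B ω)) P).1
    (CMI_eq_zero_of_markovTriple hp hM)).2
  have hBW2 : CMI p Q (fun ω => (B ω, W2 ω)) (fun ω => (W1 ω, P ω)) = 0 := by
    rw [← hW2B]
    exact CMI_comp_injective p injective_id Prod.swap_injective Prod.swap_injective Q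
      (fun ω => (W2 ω, B ω)) (fun ω => (P ω, W1 ω))
  have hQB := ((CMI_prod_right_eq_zero_iff hp Q B W2 _).1 hBW2).1
  calc CMI p W2 B (fun ω => (W1 ω, P ω))
      ≤ CMI p W2 B (fun ω => ((W1 ω, P ω), Q ω)) :=
        CMI_le_CMI_cond_prod_of_CMI_eq_zero hp hQB W2
    _ = CMI p W2 B (fun ω => ((W1 ω, Q ω), P ω)) :=
        (CMI_comp_injective p injective_id injective_id
          (h := fun t : (δ × β) × α => ((t.1.1, t.2), t.1.2))
          (LeftInverse.injective (g := fun t => ((t.1.1, t.2), t.1.2)) fun _ => rfl)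
          W2 B fun ω => ((W1 ω, P ω), Q ω)).symm
    _ ≤ CMI p (fun ω => (P ω, W2 ω)) B (fun ω => (W1 ω, Q ω)) :=
        CMI_le_CMI_prod_left hp P W2 B _
    _ = CMI p (fun ω => (W2 ω, P ω)) B (fun ω => (W1 ω, Q ω)) :=
        CMI_comp_injective p Prod.swap_injective injective_id injective_id
          (fun ω => (W2 ω, P ω)) B _
    _ = CMI p (fun ω => (W1 ω, W2 ω, P ω)) B (fun ω => (W1 ω, Q ω)) :=
        (CMI_prod_comp_cond_left p Prod.fst _ B _).symm

end CMI

section Telescoping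

variable (p : Ω → ℝ) [Fintype α] [Fintype β] [Fintype γ] {n : ℕ}

theorem CMI_prefix_succ (X : Ω → α) (Y : Ω → Fin n → β) (Z : Ω → γ) {k : ℕ} (hk : k < n) :
    CMI p X (fun ω (j : {j : Fin n // j.1 < k + 1}) => Y ω j.1) Z
      = CMI p X (fun ω => (fun j : {j : Fin n // j.1 < k} => Y ω j.1, Y ω ⟨k, hk⟩)) Z := by
  let extend (t : ({j : Fin n // j.1 < k} → β) × β) (j : {j : Fin n // j.1 < k + 1}) : β :=
    if h : j.1.1 < k then t.1 ⟨j.1, h⟩ else t.2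
  let restrict (y : {j : Fin n // j.1 < k + 1} → β) : ({j : Fin n // j.1 < k} → β) × β :=
    (fun j => y ⟨j.1, Nat.lt_succ_of_lt j.2⟩, y ⟨⟨k, hk⟩, Nat.lt_succ_self k⟩)
  have hinj : Injective extend := LeftInverse.injective (g := restrict) fun t =>
    Prod.ext (funext fun j => dif_pos j.2) (dif_neg (lt_irrefl k))
  have hY : (fun ω => extend (fun j : {j : Fin n // j.1 < k} => Y ω j.1, Y ω ⟨k, hk⟩))
      = fun ω (j : {j : Fin n // j.1 < k + 1}) => Y ω j.1 := by
    ext ω j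
    by_cases h : j.1.1 < k
    · exact dif_pos h
    · simp only [extend, dif_neg h]
      have hj : j.1 = ⟨k, hk⟩ := Fin.ext (show j.1.1 = k by have := j.2; omega)
      rw [hj]
  rw [← hY]
  exact CMI_comp_injective p injective_id hinj injective_id X _ Z

theorem CMI_prefix_eq_sum (X : Ω → α) (Y : Ω → Fin n → β) (Z : Ω → γ) {m : ℕ} (hm : m ≤ n) :
    CMI p X (fun ω (j : {j : Fin n // j.1 < m}) => Y ω j.1) Z
      = ∑ i with i.1 < m, CMI p X (fun ω => Y ω i)
          (fun ω => (Z ω, fun j : {j : Fin n // j < i} => Y ω j.1)) := by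
  induction m with
  | zero =>
    have : IsEmpty {j : Fin n // j.1 < 0} := ⟨fun j => Nat.not_lt_zero _ j.2⟩
    rw [CMI_eq_zero_of_subsingleton, Finset.filter_false_of_mem fun i _ => Nat.not_lt_zero _,
      Finset.sum_empty]
  | succ k ih =>
    have hk : k < n := hm
    have hfilter : Finset.univ.filter (fun i : Fin n => i.1 < k + 1)
        = insert ⟨k, hk⟩ (Finset.univ.filter fun i : Fin n => i.1 < k) := by
      ext i
      simp only [Finset.mem_filter, Finset.mem_insert, Finset.mem_univ, true_and, Fin.ext_iff]
      omega
    rw [hfilter, Finset.sum_insert (by simp), ← ih hk.le, CMI_prefix_succ p X Y Z hk,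
      CMI_prod_right]
    exact add_comm _ _

theorem CMI_eq_sum_CMI_prefix (X : Ω → α) (Y : Ω → Fin n → β) (Z : Ω → γ) :
    CMI p X Y Z = ∑ i, CMI p X (fun ω => Y ω i)
      (fun ω => (Z ω, fun j : {j : Fin n // j < i} => Y ω j.1)) := by
  have hres := CMI_comp_injective p injective_id
    (g := fun (y : Fin n → β) (j : {j : Fin n // j.1 < n}) => y j.1)
    (LeftInverse.injective (g := fun y i => y ⟨i, i.2⟩) fun _ => rfl) injective_id X Y Z
  simp only [id] at hres
  rw [← hres, CMI_prefix_eq_sum p X Y Z le_rfl, Finset.filter_true_of_mem fun i _ => i.2]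

end Telescoping

end

/-- Single-letterization of the bound on `R₂` in the converse
proof: if for each `i` the prefix `Y₁^{i−1}` is conditionally independent of
`(W₁, W₂, Y_{2,i})` given `Y₂^{i−1}`, then
`I(W₂;Y₂^n|W₁) ≤ ∑_i I(W₁,W₂,Y₂^{i−1}; Y_{2,i} | W₁,Y₁^{i−1})`. -/
theorem single_letterization_R2
    (p : Ω → ℝ) (hp : IsPMF p)
    {𝒲₁ 𝒲₂ α β : Type*} [Fintype 𝒲₁] [Fintype 𝒲₂] [Fintype α] [Fintype β]
    (W1 : Ω → 𝒲₁) (W2 : Ω → 𝒲₂)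
    {n : ℕ} (Y1 : Ω → Fin n → α) (Y2 : Ω → Fin n → β)
    (hci : ∀ i : Fin n,
      MarkovTriple p
        (fun ω => fun j : {j : Fin n // j < i} => Y1 ω j.1)
        (fun ω => fun j : {j : Fin n // j < i} => Y2 ω j.1)
        (fun ω => (W1 ω, W2 ω, Y2 ω i))) :
    CMI p W2 Y2 W1 ≤
      ∑ i : Fin n,
        CMI p (fun ω => (W1 ω, W2 ω, fun j : {j : Fin n // j < i} => Y2 ω j.1))
          (fun ω => Y2 ω i)
          (fun ω => (W1 ω, fun j : {j : Fin n // j < i} => Y1 ω j.1)) := by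
  rw [CMI_eq_sum_CMI_prefix p W2 Y2 W1]
  exact Finset.sum_le_sum fun i _ => CMI_le_CMI_of_markovTriple hp.1 W1 W2 (hci i)

end BRSec
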